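/- For all a, b > 0 and ξ ∈ ℝ, as ε → 0⁺ one has α*_ε(a,b,ξ) → (1/2)·(a·(ξ⁺)² + b·(ξ⁻)²), where ξ⁺ = max{ξ, 0} and ξ⁻ = max{-ξ, 0}. -/

import Mathlib

/-!
Write `a = c e^m`, `b = c e^{-m}` with `c = √(ab)` and `m = (log a - log b)/2`. Then
`Λ_H(c e^{-v}, c e^v) = c v / sinh v`, so the integrand is exactly
`sinh u · Λ_H(a e^{-u}, b e^u) = (a+b)/2 · (u - m) + (a-b)/2 · (u - m) coth (u - m)`.
Since `v coth v` differs from `|v|` by at most `1`, after the substitution `u = x/ε` the rescaled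
integrand differs from `(a+b)/2 · x + (a-b)/2 · |x| = a x⁺ - b x⁻` by `O(ε)` uniformly in `x`,
and integrating this limit over `[0, ξ]` gives the claim.
-/

open Real Filter

/-- The logarithmic mean `Λ(s,t)`. -/
noncomputable def logMean (s t : ℝ) : ℝ :=
  if s = t then s else (s - t) / (Real.log s - Real.log t)

/-- The harmonic-logarithmic mean `Λ_H(s,t) = st/Λ(s,t)`. -/
noncomputable def harmLogMean (s t : ℝ) : ℝ := s * t / logMean s t

/-- `α*_ε(a,b,ξ) = ε ∫₀^ξ sinh(x/ε) Λ_H(a e^{-x/ε}, b e^{x/ε}) dx`. -/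
noncomputable def alphaEps (ε a b ξ : ℝ) : ℝ :=
  ε * ∫ x in (0:ℝ)..ξ,
    Real.sinh (x / ε) * harmLogMean (a * Real.exp (-x / ε)) (b * Real.exp (x / ε))

open Topology Set MeasureTheory

theorem tendsto_intervalIntegral_of_abs_sub_le_mul {F : ℝ → ℝ → ℝ} {f : ℝ → ℝ} {a b C : ℝ}
    (hF : ∀ ε > 0, Measurable (F ε)) (hf : IntervalIntegrable f volume a b)
    (hFf : ∀ ε > 0, ∀ x, |F ε x - f x| ≤ C * ε) :
    Tendsto (fun ε => ∫ x in a..b, F ε x) (𝓝[>] 0) (𝓝 (∫ x in a..b, f x)) := by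
  refine intervalIntegral.tendsto_integral_filter_of_dominated_convergence
    (fun x => |f x| + |C|) ?_ ?_ (hf.abs.add intervalIntegrable_const) ?_
  · filter_upwards [self_mem_nhdsWithin] with ε hε using (hF ε hε).aestronglyMeasurable
  · filter_upwards [Ioc_mem_nhdsGT one_pos] with ε hε
    refine ae_of_all _ fun x _ => ?_
    have hCε : C * ε ≤ |C| := by
      calc C * ε ≤ |C| * ε := by gcongr; exacts [hε.1.le, le_abs_self C]
        _ ≤ |C| := mul_le_of_le_one_right (abs_nonneg C) hε.2
    calc ‖F ε x‖ = |f x + (F ε x - f x)| := by rw [Real.norm_eq_abs, add_sub_cancel]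
      _ ≤ |f x| + |F ε x - f x| := abs_add_le _ _
      _ ≤ |f x| + |C| := by linarith [hFf ε hε.1 x]
  · refine ae_of_all _ fun x _ => ?_
    have hCε : Tendsto (fun ε : ℝ => C * ε) (𝓝[>] 0) (𝓝 0) := by
      simpa using ((continuous_const_mul C).tendsto 0).mono_left nhdsWithin_le_nhds
    rw [tendsto_iff_norm_sub_tendsto_zero]
    exact squeeze_zero' (Eventually.of_forall fun _ => norm_nonneg _)
      (eventually_mem_nhdsWithin.mono fun ε hε => hFf ε hε x) hCε

noncomputable def mulCoth (v : ℝ) : ℝ := if v = 0 then 1 else v * cosh v / sinh v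

theorem mulCoth_neg (v : ℝ) : mulCoth (-v) = mulCoth v := by
  rcases eq_or_ne v 0 with rfl | hv
  · simp
  · simp only [mulCoth, neg_eq_zero, hv, if_false, cosh_neg, sinh_neg, neg_mul, neg_div_neg_eq]

theorem mulCoth_sub_self_mem_Icc {v : ℝ} (hv : 0 < v) : mulCoth v - v ∈ Icc 0 1 := by
  have hsinh : 0 < sinh v := sinh_pos_iff.mpr hv
  have hdiff : mulCoth v - v = v * exp (-v) / sinh v := by
    rw [mulCoth, if_neg hv.ne', ← cosh_sub_sinh]
    field_simp
  -- `v e^{-v} ≤ sinh v` is `2v ≤ e^{2v} - 1`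
  have hle : v * exp (-v) ≤ sinh v := by
    have h2v : 2 * v + 1 ≤ exp (2 * v) := add_one_le_exp _
    have hexp : exp v = exp (2 * v) * exp (-v) := by rw [← exp_add]; ring_nf
    rw [sinh_eq, hexp]
    nlinarith [exp_pos (-v)]
  rw [hdiff]
  exact ⟨by positivity, (div_le_one hsinh).mpr hle⟩

theorem abs_mulCoth_sub_abs_le_one (v : ℝ) : |mulCoth v - (|v|)| ≤ 1 := by
  rcases lt_trichotomy v 0 with hv | rfl | hv
  · have h := mulCoth_sub_self_mem_Icc (neg_pos.mpr hv)
    rw [mulCoth_neg] at h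
    rw [abs_of_neg hv, abs_le]
    constructor <;> linarith [h.1, h.2]
  · simp [mulCoth]
  · have h := mulCoth_sub_self_mem_Icc hv
    rw [abs_of_pos hv, abs_le]
    constructor <;> linarith [h.1, h.2]

@[fun_prop]
theorem measurable_mulCoth : Measurable mulCoth :=
  Measurable.ite (measurableSet_singleton 0) measurable_const (by fun_prop)

theorem abs_mul_mulCoth_sub_abs_le {ε : ℝ} (hε : 0 < ε) (x m : ℝ) :
    |ε * mulCoth (x / ε - m) - (|x|)| ≤ ε * (1 + |m|) := by
  have hscale : |x - ε * m| = ε * |x / ε - m| := by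
    rw [show x - ε * m = ε * (x / ε - m) by field_simp, abs_mul, abs_of_pos hε]
  calc |ε * mulCoth (x / ε - m) - (|x|)|
      = |ε * (mulCoth (x / ε - m) - (|x / ε - m|)) + (|x - ε * m| - |x|)| := by
        rw [hscale]; congr 1; ring
    _ ≤ ε * 1 + ε * |m| := by
        refine (abs_add_le _ _).trans (add_le_add ?_ ?_)
        · rw [abs_mul, abs_of_pos hε]
          exact mul_le_mul_of_nonneg_left (abs_mulCoth_sub_abs_le_one _) hε.le
        · simpa [abs_mul, abs_of_pos hε] using abs_abs_sub_abs_le_abs_sub (x - ε * m) x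
    _ = ε * (1 + |m|) := by ring

theorem harmLogMean_self {c : ℝ} (hc : c ≠ 0) : harmLogMean c c = c := by
  rw [harmLogMean, logMean, if_pos rfl, mul_div_cancel_right₀ _ hc]

theorem harmLogMean_mul_exp_neg_mul_exp {c v : ℝ} (hc : 0 < c) (hv : v ≠ 0) :
    harmLogMean (c * exp (-v)) (c * exp v) = c * v / sinh v := by
  have hne : c * exp (-v) ≠ c * exp v := by
    rw [Ne, mul_right_inj' hc.ne', exp_eq_exp]
    exact fun h => hv (by linarith)
  have hprod : c * exp (-v) * (c * exp v) = c ^ 2 := by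
    rw [mul_mul_mul_comm, ← exp_add, neg_add_cancel, exp_zero, mul_one, sq]
  have hdiff : c * exp (-v) - c * exp v = -(2 * c * sinh v) := by
    rw [sinh_eq]; ring
  rw [harmLogMean, logMean, if_neg hne, log_mul hc.ne' (exp_pos _).ne',
    log_mul hc.ne' (exp_pos _).ne', log_exp, log_exp, hprod, hdiff]
  field_simp [sinh_ne_zero.mpr hv]
  ring

theorem sinh_add_mul_harmLogMean {c : ℝ} (hc : 0 < c) (v m : ℝ) :
    sinh (v + m) * harmLogMean (c * exp (-v)) (c * exp v)
      = c * cosh m * v + c * sinh m * mulCoth v := by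
  rcases eq_or_ne v 0 with rfl | hv
  · simp [harmLogMean_self hc.ne', mulCoth, mul_comm]
  · rw [harmLogMean_mul_exp_neg_mul_exp hc hv, mulCoth, if_neg hv, sinh_add]
    field_simp [sinh_ne_zero.mpr hv]

theorem sinh_mul_harmLogMean {a b : ℝ} (ha : 0 < a) (hb : 0 < b) (u : ℝ) :
    sinh u * harmLogMean (a * exp (-u)) (b * exp u)
      = (a + b) / 2 * (u - (log a - log b) / 2)
        + (a - b) / 2 * mulCoth (u - (log a - log b) / 2) := by
  set m := (log a - log b) / 2
  obtain ⟨c, hc, hca, hcb⟩ : ∃ c, 0 < c ∧ c * exp m = a ∧ c * exp (-m) = b := by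
    refine ⟨exp ((log a + log b) / 2), exp_pos _, ?_, ?_⟩ <;> rw [← exp_add]
    · rw [show (log a + log b) / 2 + m = log a by ring, exp_log ha]
    · rw [show (log a + log b) / 2 + -m = log b by ring, exp_log hb]
  have hcosh : c * cosh m = (a + b) / 2 := by rw [cosh_eq, ← hca, ← hcb]; ring
  have hsinh : c * sinh m = (a - b) / 2 := by rw [sinh_eq, ← hca, ← hcb]; ring
  have hau : a * exp (-u) = c * exp (-(u - m)) := by
    rw [← hca, mul_assoc, ← exp_add]; ring_nf
  have hbu : b * exp u = c * exp (u - m) := by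
    rw [← hcb, mul_assoc, ← exp_add]; ring_nf
  rw [hau, hbu, ← hcosh, ← hsinh, ← sinh_add_mul_harmLogMean hc, sub_add_cancel]

theorem alphaEps_eq_integral {a b ε : ℝ} (ha : 0 < a) (hb : 0 < b) (hε : ε ≠ 0) (ξ : ℝ) :
    alphaEps ε a b ξ = ∫ x in (0 : ℝ)..ξ,
      ((a + b) / 2 * (x - ε * ((log a - log b) / 2))
        + (a - b) / 2 * (ε * mulCoth (x / ε - (log a - log b) / 2))) := by
  rw [alphaEps, ← intervalIntegral.integral_const_mul]
  refine intervalIntegral.integral_congr fun x _ => ?_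
  simp only [neg_div]
  rw [sinh_mul_harmLogMean ha hb]
  linear_combination (a + b) / 2 * mul_div_cancel₀ x hε

theorem abs_sub_upwind_le {a b ε : ℝ} (ha : 0 ≤ a) (hb : 0 ≤ b) (hε : 0 < ε) (m x : ℝ) :
    |((a + b) / 2 * (x - ε * m) + (a - b) / 2 * (ε * mulCoth (x / ε - m)))
      - ((a + b) / 2 * x + (a - b) / 2 * |x|)| ≤ (a + b) * (1 + |m|) * ε := by
  have hab : |a - b| ≤ a + b := abs_sub_le_of_nonneg_of_le ha (by linarith) hb (by linarith)
  calc _ = |-((a + b) / 2 * (ε * m)) + (a - b) / 2 * (ε * mulCoth (x / ε - m) - |x|)| := by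
        congr 1; ring
    _ ≤ (a + b) / 2 * (ε * |m|) + |a - b| / 2 * (ε * (1 + |m|)) := by
        refine (abs_add_le _ _).trans (add_le_add ?_ ?_)
        · rw [abs_neg, abs_mul, abs_mul, abs_of_pos hε, abs_of_nonneg (by positivity)]
        · rw [abs_mul, abs_div, abs_two]
          exact mul_le_mul_of_nonneg_left (abs_mul_mulCoth_sub_abs_le hε x m) (by positivity)
    _ ≤ (a + b) * (1 + |m|) * ε := by
        nlinarith [abs_nonneg m, mul_le_mul_of_nonneg_right hab (by positivity : 0 ≤ ε * (1 + |m|))]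

theorem integral_upwind (a b ξ : ℝ) :
    ∫ x in (0 : ℝ)..ξ, ((a + b) / 2 * x + (a - b) / 2 * |x|)
      = 1 / 2 * (a * max ξ 0 ^ 2 + b * max (-ξ) 0 ^ 2) := by
  rcases le_total 0 ξ with hξ | hξ
  · rw [intervalIntegral.integral_congr (g := fun x => a * x), intervalIntegral.integral_const_mul,
      integral_id, max_eq_left hξ, max_eq_right (neg_nonpos.mpr hξ)]
    · ring
    · intro x hx
      rw [uIcc_of_le hξ] at hx
      simp only [abs_of_nonneg hx.1]
      ring
  · rw [intervalIntegral.integral_congr (g := fun x => b * x), intervalIntegral.integral_const_mul,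
      integral_id, max_eq_right hξ, max_eq_left (neg_nonneg.mpr hξ)]
    · ring
    · intro x hx
      rw [uIcc_of_ge hξ] at hx
      simp only [abs_of_nonpos hx.2]
      ring

/-- As `ε → 0⁺`, `α*_ε(a,b,ξ) → (a (ξ⁺)² + b (ξ⁻)²)/2`. -/
theorem alphaEps_tendsto_upwind (a b ξ : ℝ) (ha : 0 < a) (hb : 0 < b) :
    Tendsto (fun ε : ℝ => alphaEps ε a b ξ) (nhdsWithin 0 (Set.Ioi 0))
      (nhds ((1 / 2) * (a * max ξ 0 ^ 2 + b * max (-ξ) 0 ^ 2))) := by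
  rw [← integral_upwind]
  refine (tendsto_intervalIntegral_of_abs_sub_le_mul (fun ε _ => by fun_prop)
    ((by fun_prop : Continuous _).intervalIntegrable _ _)
    fun ε hε x => abs_sub_upwind_le ha.le hb.le hε ((log a - log b) / 2) x).congr' ?_
  filter_upwards [self_mem_nhdsWithin] with ε hε
  exact (alphaEps_eq_integral ha hb hε.ne' ξ).symm
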